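/- Let L be the face family generated by the facet list F0={1,4,7,9}, F1={2,4,7,9}, F2={0,2,4,5,8}, F3={0,2,4,6,9}, F4={1,3,6,7,8}, F5={1,3,4,6,9}, F6={0,2,5,7,9}, F7={1,3,5,7,9}, F8={0,1,4,6,8}, F9={1,2,4,7,8}, F10={2,3,5,7,8}, F11={0,3,5,6,8,9} (subsets of Fin 10), ordered by inclusion. Then L is a lattice, graded of length 5, Eulerian, and its numbers of elements of rank 1, 2, 3, 4 are 10, 33, 35, 12 respectively; in particular (10,33,35,12) is the f-vector of an Eulerian lattice of length 5. -/
import Mathlib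

set_option maxHeartbeats 4000000
set_option maxRecDepth 100000

/-- The face family generated by subsets `F 0, …, F (m-1)` of `Fin n`:
`Set.univ` together with all intersections over nonempty index sets. -/
def faceFamily {n m : ℕ} (F : Fin m → Set (Fin n)) : Set (Set (Fin n)) :=
  insert Set.univ {S | ∃ I : Set (Fin m), I.Nonempty ∧ S = ⋂ i ∈ I, F i}

/-- The facet list of the 3-sphere `(10₍₃₃,₃₅₎)`. -/
def facets : Fin 12 → Set (Fin 10) :=
  ![{1,4,7,9}, {2,4,7,9}, {0,2,4,5,8}, {0,2,4,6,9}, {1,3,6,7,8},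
    {1,3,4,6,9}, {0,2,5,7,9}, {1,3,5,7,9}, {0,1,4,6,8}, {1,2,4,7,8},
    {2,3,5,7,8}, {0,3,5,6,8,9}]

namespace Aux

def fmask : Fin 12 → ℕ := ![658,660,309,597,458,602,677,682,339,406,428,873]

def toSet (m : ℕ) : Set (Fin 10) := {x | m.testBit x.1}

def faceMasksList : List ℕ :=
  [0, 1, 2, 4, 5, 8, 10, 16, 17, 18, 20, 21, 32, 33, 36, 37, 40, 64, 65, 66, 72, 74,
   80, 81, 82, 128, 130, 132, 136, 138, 144, 146, 148, 160, 164, 168, 256, 257, 258,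
   260, 264, 272, 273, 274, 276, 288, 289, 292, 296, 309, 320, 321, 322, 328, 339,
   384, 386, 388, 392, 406, 428, 458, 512, 513, 514, 516, 517, 520, 522, 528, 530,
   532, 544, 545, 552, 576, 577, 584, 592, 597, 602, 640, 642, 644, 656, 658, 660,
   672, 677, 682, 873, 1023]

lemma hf0 : facets 0 = toSet (fmask 0) := by
  rw [show facets 0 = ({1,4,7,9} : Set (Fin 10)) from rfl, show fmask 0 = 658 from rfl]
  ext x; simp only [toSet, Set.mem_setOf_eq]; revert x; decide

lemma hf1 : facets 1 = toSet (fmask 1) := by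
  rw [show facets 1 = ({2,4,7,9} : Set (Fin 10)) from rfl, show fmask 1 = 660 from rfl]
  ext x; simp only [toSet, Set.mem_setOf_eq]; revert x; decide

lemma hf2 : facets 2 = toSet (fmask 2) := by
  rw [show facets 2 = ({0,2,4,5,8} : Set (Fin 10)) from rfl, show fmask 2 = 309 from rfl]
  ext x; simp only [toSet, Set.mem_setOf_eq]; revert x; decide

lemma hf3 : facets 3 = toSet (fmask 3) := by
  rw [show facets 3 = ({0,2,4,6,9} : Set (Fin 10)) from rfl, show fmask 3 = 597 from rfl]
  ext x; simp only [toSet, Set.mem_setOf_eq]; revert x; decide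

lemma hf4 : facets 4 = toSet (fmask 4) := by
  rw [show facets 4 = ({1,3,6,7,8} : Set (Fin 10)) from rfl, show fmask 4 = 458 from rfl]
  ext x; simp only [toSet, Set.mem_setOf_eq]; revert x; decide

lemma hf5 : facets 5 = toSet (fmask 5) := by
  rw [show facets 5 = ({1,3,4,6,9} : Set (Fin 10)) from rfl, show fmask 5 = 602 from rfl]
  ext x; simp only [toSet, Set.mem_setOf_eq]; revert x; decide

lemma hf6 : facets 6 = toSet (fmask 6) := by
  rw [show facets 6 = ({0,2,5,7,9} : Set (Fin 10)) from rfl, show fmask 6 = 677 from rfl]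
  ext x; simp only [toSet, Set.mem_setOf_eq]; revert x; decide

lemma hf7 : facets 7 = toSet (fmask 7) := by
  rw [show facets 7 = ({1,3,5,7,9} : Set (Fin 10)) from rfl, show fmask 7 = 682 from rfl]
  ext x; simp only [toSet, Set.mem_setOf_eq]; revert x; decide

lemma hf8 : facets 8 = toSet (fmask 8) := by
  rw [show facets 8 = ({0,1,4,6,8} : Set (Fin 10)) from rfl, show fmask 8 = 339 from rfl]
  ext x; simp only [toSet, Set.mem_setOf_eq]; revert x; decide

lemma hf9 : facets 9 = toSet (fmask 9) := by
  rw [show facets 9 = ({1,2,4,7,8} : Set (Fin 10)) from rfl, show fmask 9 = 406 from rfl]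
  ext x; simp only [toSet, Set.mem_setOf_eq]; revert x; decide

lemma hf10 : facets 10 = toSet (fmask 10) := by
  rw [show facets 10 = ({2,3,5,7,8} : Set (Fin 10)) from rfl, show fmask 10 = 428 from rfl]
  ext x; simp only [toSet, Set.mem_setOf_eq]; revert x; decide

lemma hf11 : facets 11 = toSet (fmask 11) := by
  rw [show facets 11 = ({0,3,5,6,8,9} : Set (Fin 10)) from rfl, show fmask 11 = 873 from rfl]
  ext x; simp only [toSet, Set.mem_setOf_eq]; revert x; decide

lemma hfacets : ∀ i, facets i = toSet (fmask i) := by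
  intro i; fin_cases i
  exacts [hf0, hf1, hf2, hf3, hf4, hf5, hf6, hf7, hf8, hf9, hf10, hf11]

instance : Std.Commutative (α := ℕ) (· &&& ·) := ⟨Nat.land_comm⟩
instance : Std.Associative (α := ℕ) (· &&& ·) := ⟨Nat.land_assoc⟩

/-- intersection mask of a finite family of facets -/
def imask (J : Finset (Fin 12)) : ℕ := J.fold (· &&& ·) 1023 fmask

lemma testBit_1023 {k : ℕ} (h : k < 10) : (1023 : ℕ).testBit k = true := by
  rw [show (1023:ℕ) = 2^10 - 1 by norm_num, Nat.testBit_two_pow_sub_one]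
  simpa using h

lemma testBit_imask (J : Finset (Fin 12)) (k : ℕ) :
    (imask J).testBit k = true ↔ k < 10 ∧ ∀ i ∈ J, (fmask i).testBit k = true := by
  classical
  induction J using Finset.induction_on with
  | empty =>
      simp only [imask, Finset.fold_empty, Finset.notMem_empty]
      constructor
      · intro h
        refine ⟨?_, by intro i hi; exact absurd hi (by simp)⟩
        by_contra hk
        rw [show (1023:ℕ) = 2^10 - 1 by norm_num, Nat.testBit_two_pow_sub_one] at h
        simp at h
        omega
      · intro ⟨h, _⟩; exact testBit_1023 h
  | @insert a s ha ih =>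
      simp only [imask] at ih ⊢
      rw [Finset.fold_insert ha, Nat.testBit_land, Bool.and_eq_true, ih]
      constructor
      · rintro ⟨h1, hk, h2⟩
        refine ⟨hk, ?_⟩
        intro i hi
        rcases Finset.mem_insert.1 hi with rfl | hi
        · exact h1
        · exact h2 i hi
      · rintro ⟨hk, h⟩
        exact ⟨h a (Finset.mem_insert_self a s), hk,
          fun i hi => h i (Finset.mem_insert_of_mem hi)⟩

lemma bridge (J : Finset (Fin 12)) :
    ⋂ i ∈ (↑J : Set (Fin 12)), facets i = toSet (imask J) := by
  ext x
  simp only [Set.mem_iInter, Finset.mem_coe, toSet, Set.mem_setOf_eq]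
  constructor
  · intro h
    exact (testBit_imask J x.1).2 ⟨x.2, fun i hi => by
      have := h i hi
      rwa [hfacets i] at this⟩
  · intro h i hi
    rw [hfacets i]
    exact ((testBit_imask J x.1).1 h).2 i hi

lemma univ_eq : (Set.univ : Set (Fin 10)) = toSet 1023 := by
  ext x
  simp only [Set.mem_univ, toSet, Set.mem_setOf_eq, true_iff]
  exact testBit_1023 x.2

lemma hclos_step : ∀ m ∈ faceMasksList, ∀ i : Fin 12, (fmask i &&& m) ∈ faceMasksList := by
  decide

lemma hclos : ∀ J : Finset (Fin 12), imask J ∈ faceMasksList := by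
  classical
  intro J
  induction J using Finset.induction_on with
  | empty => decide
  | @insert a s ha ih =>
      have h : imask (insert a s) = fmask a &&& imask s := by
        simp only [imask]
        rw [Finset.fold_insert ha]
      rw [h]
      exact hclos_step _ ih a

def witJ (m : ℕ) : Finset (Fin 12) := Finset.univ.filter (fun i => m &&& fmask i = m)

lemma hwit : ∀ m ∈ faceMasksList, imask (witJ m) = m := by decide

lemma hwitne : ∀ m ∈ faceMasksList, m ≠ 1023 → (witJ m).Nonempty := by decide

lemma hlt : ∀ m ∈ faceMasksList, m < 1024 := by decide

lemma mem_faceFamily_iff (S : Set (Fin 10)) :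
    S ∈ faceFamily facets ↔ ∃ m ∈ faceMasksList, S = toSet m := by
  constructor
  · intro h
    rcases h with h | ⟨I, hne, rfl⟩
    · exact ⟨1023, by decide, by rw [h]; exact univ_eq⟩
    · have hfin : I.Finite := Set.toFinite I
      refine ⟨imask hfin.toFinset, hclos _, ?_⟩
      rw [← bridge, Set.Finite.coe_toFinset]
  · rintro ⟨m, hm, rfl⟩
    by_cases h : m = 1023
    · subst h
      exact Or.inl univ_eq.symm
    · refine Or.inr ⟨↑(witJ m), Finset.coe_nonempty.2 (hwitne m hm h), ?_⟩
      rw [bridge, hwit m hm]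

lemma toSet_subset {m m' : ℕ} (hm : m < 1024) :
    toSet m ⊆ toSet m' ↔ m &&& m' = m := by
  constructor
  · intro h
    apply Nat.eq_of_testBit_eq
    intro k
    rw [Nat.testBit_land]
    by_cases hk : k < 10
    · by_cases hb : m.testBit k
      · have hx : (⟨k, hk⟩ : Fin 10) ∈ toSet m := hb
        have := h hx
        simp only [toSet, Set.mem_setOf_eq] at this
        rw [hb, this]
        rfl
      · simp [hb]
    · have : m.testBit k = false := Nat.testBit_lt_two_pow (by
        calc m < 1024 := hm
        _ = 2 ^ 10 := by norm_num
        _ ≤ 2 ^ k := Nat.pow_le_pow_right (by norm_num) (by omega))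
      simp [this]
  · intro h x hx
    have hx' : (m &&& m').testBit x.1 = true := by rw [h]; exact hx
    rw [Nat.testBit_land, Bool.and_eq_true] at hx'
    exact hx'.2

lemma toSet_inj {m m' : ℕ} (hm : m < 1024) (hm' : m' < 1024)
    (h : toSet m = toSet m') : m = m' := by
  have h1 := (toSet_subset hm).1 h.le
  have h2 := (toSet_subset hm').1 h.ge
  rw [← h1, Nat.land_comm, h2]

def faceMasks : Finset ℕ := faceMasksList.toFinset

structure M where
  val : ℕ
  mem : val ∈ faceMasks

lemma Mext {a b : M} (h : a.val = b.val) : a = b := by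
  cases a; cases b; cases h; rfl

instance : DecidableEq M := fun a b =>
  decidable_of_iff (a.val = b.val) ⟨fun h => Mext h, fun h => congrArg M.val h⟩

def eqv : {m : ℕ // m ∈ faceMasks} ≃ M where
  toFun s := ⟨s.1, s.2⟩
  invFun a := ⟨a.val, a.mem⟩
  left_inv _ := rfl
  right_inv _ := rfl

instance : Fintype M := Fintype.ofEquiv _ eqv

instance : PartialOrder M where
  le := fun a b => a.val &&& b.val = a.val
  lt := fun a b => (a.val &&& b.val = a.val) ∧ ¬(b.val &&& a.val = b.val)
  lt_iff_le_not_ge := fun _ _ => Iff.rfl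
  le_refl := fun a => Nat.and_self a.val
  le_trans := fun a b c hab hbc => by
    show a.val &&& c.val = a.val
    conv_lhs => rw [← hab]
    rw [Nat.land_assoc, hbc, hab]
  le_antisymm := fun a b hab hba => by
    apply Mext
    show a.val = b.val
    rw [← hab, Nat.land_comm]
    exact hba

instance : DecidableRel ((· ≤ ·) : M → M → Prop) :=
  fun a b => inferInstanceAs (Decidable (a.val &&& b.val = a.val))

instance : DecidableRel ((· < ·) : M → M → Prop) :=
  fun a b =>
    inferInstanceAs (Decidable ((a.val &&& b.val = a.val) ∧ ¬(b.val &&& a.val = b.val)))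

lemma memList (m : M) : m.val ∈ faceMasksList := List.mem_toFinset.1 m.mem

lemma mlt (m : M) : m.val < 1024 := hlt m.val (memList m)

def fmaskList : List ℕ := [658,660,309,597,458,602,677,682,339,406,428,873]

def popcnt (m : ℕ) : ℕ := ((List.range 10).filter (fun k => m.testBit k)).length

def rkM (m : M) : ℕ :=
  if m.val = 0 then 0
  else if m.val = 1023 then 5
  else if m.val ∈ fmaskList then 4
  else min (popcnt m.val) 3

noncomputable def toL : M → ↥(faceFamily facets) :=
  fun m => ⟨toSet m.val, (mem_faceFamily_iff _).2 ⟨m.val, memList m, rfl⟩⟩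

lemma toL_inj : Function.Injective toL := by
  intro a b h
  exact Mext (toSet_inj (mlt a) (mlt b) (congrArg Subtype.val h))

lemma toL_surj : Function.Surjective toL := by
  intro S
  obtain ⟨m, hm, hS⟩ := (mem_faceFamily_iff S.1).1 S.2
  exact ⟨⟨m, List.mem_toFinset.2 hm⟩, Subtype.ext hS.symm⟩

noncomputable def e : M ≃o ↥(faceFamily facets) where
  toEquiv := Equiv.ofBijective toL ⟨toL_inj, toL_surj⟩
  map_rel_iff' := by
    intro a b
    show toL a ≤ toL b ↔ a ≤ b
    constructor
    · intro h
      exact (toSet_subset (m' := b.val) (mlt a)).1 h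
    · intro h
      exact (toSet_subset (m' := b.val) (mlt a)).2 h

lemma le_def {a b : M} : a ≤ b ↔ a.val &&& b.val = a.val := Iff.rfl

lemma le_iff_testBit (m m' : ℕ) :
    m &&& m' = m ↔ ∀ k, m.testBit k = true → m'.testBit k = true := by
  constructor
  · intro h k hk
    have h2 : (m &&& m').testBit k = true := by rw [h]; exact hk
    rw [Nat.testBit_land, Bool.and_eq_true] at h2
    exact h2.2
  · intro h
    apply Nat.eq_of_testBit_eq
    intro k
    rw [Nat.testBit_land]
    cases hmk : m.testBit k with
    | false => rfl
    | true => rw [h k hmk]; rfl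

lemma testBit_lt10 {m k : ℕ} (hm : m < 1024) (h : m.testBit k = true) : k < 10 := by
  by_contra hk
  rw [Nat.testBit_lt_two_pow (by
    calc m < 1024 := hm
    _ = 2 ^ 10 := by norm_num
    _ ≤ 2 ^ k := Nat.pow_le_pow_right (by norm_num) (by omega))] at h
  exact absurd h (by simp)

lemma mem_witJ {x : ℕ} {i : Fin 12} : i ∈ witJ x ↔ x &&& fmask i = x := by
  simp [witJ]

def supM (a b : M) : M :=
  ⟨imask (witJ (a.val ||| b.val)), List.mem_toFinset.2 (hclos _)⟩

lemma or_left {a b : M} : a.val &&& (a.val ||| b.val) = a.val := by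
  rw [le_iff_testBit]
  intro k hk
  rw [Nat.testBit_or, hk]
  rfl

lemma or_right {a b : M} : b.val &&& (a.val ||| b.val) = b.val := by
  rw [le_iff_testBit]
  intro k hk
  rw [Nat.testBit_or, hk]
  simp

lemma le_sup_of_le_or {c : M} (x : ℕ) (_hx : x < 1024)
    (h : c.val &&& x = c.val) : c.val &&& imask (witJ x) = c.val := by
  rw [le_iff_testBit]
  intro k hk
  refine (testBit_imask _ k).2 ⟨testBit_lt10 (mlt c) hk, ?_⟩
  intro i hi
  have hxi : x &&& fmask i = x := mem_witJ.1 hi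
  exact (le_iff_testBit x (fmask i)).1 hxi k (((le_iff_testBit _ _).1 h) k hk)

lemma sup_least (a b d : M) (ha : a ≤ d) (hb : b ≤ d) : supM a b ≤ d := by
  rw [le_def] at ha hb ⊢
  set x := a.val ||| b.val with hxdef
  have hxd : x &&& d.val = x := by
    rw [le_iff_testBit]
    intro k hk
    rw [hxdef, Nat.testBit_or, Bool.or_eq_true] at hk
    rcases hk with hk | hk
    · exact (le_iff_testBit _ _).1 ha k hk
    · exact (le_iff_testBit _ _).1 hb k hk
  have hsub : witJ d.val ⊆ witJ x := by
    intro i hi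
    have hdi : d.val &&& fmask i = d.val := mem_witJ.1 hi
    apply mem_witJ.2
    calc x &&& fmask i = (x &&& d.val) &&& fmask i := by rw [hxd]
    _ = x &&& (d.val &&& fmask i) := Nat.land_assoc _ _ _
    _ = x &&& d.val := by rw [hdi]
    _ = x := hxd
  have key : imask (witJ x) &&& d.val = imask (witJ x) := by
    conv_lhs => rw [← hwit d.val (memList d)]
    rw [le_iff_testBit]
    intro k hk
    have h2 := (testBit_imask _ k).1 hk
    exact (testBit_imask _ k).2 ⟨h2.1, fun i hi => h2.2 i (hsub hi)⟩
  exact key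

-- computational facts
lemma c1 : ∀ a b : M, ∃ c : M, (a ≤ c ∧ b ≤ c) ∧ ∀ d : M, a ≤ d → b ≤ d → c ≤ d := by
  intro a b
  refine ⟨supM a b, ⟨?_, ?_⟩, fun d => sup_least a b d⟩
  · exact le_sup_of_le_or _ (by
      have := Nat.or_lt_two_pow (n := 10) (by simpa using mlt a) (by simpa using mlt b)
      simpa using this) or_left
  · exact le_sup_of_le_or _ (by
      have := Nat.or_lt_two_pow (n := 10) (by simpa using mlt a) (by simpa using mlt b)
      simpa using this) or_right

lemma imask_union (J1 J2 : Finset (Fin 12)) :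
    imask (J1 ∪ J2) = imask J1 &&& imask J2 := by
  apply Nat.eq_of_testBit_eq
  intro k
  rw [Nat.testBit_land, ← Bool.coe_iff_coe, Bool.and_eq_true,
    testBit_imask, testBit_imask, testBit_imask]
  constructor
  · rintro ⟨hk, h⟩
    exact ⟨⟨hk, fun i hi => h i (Finset.mem_union_left _ hi)⟩,
      ⟨hk, fun i hi => h i (Finset.mem_union_right _ hi)⟩⟩
  · rintro ⟨⟨hk, h1⟩, ⟨_, h2⟩⟩
    refine ⟨hk, fun i hi => ?_⟩
    rcases Finset.mem_union.1 hi with hi | hi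
    · exact h1 i hi
    · exact h2 i hi

def infM (a b : M) : M :=
  ⟨a.val &&& b.val, List.mem_toFinset.2 (by
    have h : imask (witJ a.val ∪ witJ b.val) = a.val &&& b.val := by
      rw [imask_union, hwit a.val (memList a), hwit b.val (memList b)]
    exact h ▸ hclos (witJ a.val ∪ witJ b.val))⟩

lemma c2 : ∀ a b : M, ∃ c : M, (c ≤ a ∧ c ≤ b) ∧ ∀ d : M, d ≤ a → d ≤ b → d ≤ c := by
  intro a b
  refine ⟨infM a b, ⟨?_, ?_⟩, ?_⟩
  · show (a.val &&& b.val) &&& a.val = a.val &&& b.val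
    rw [Nat.land_assoc, Nat.land_comm b.val a.val, ← Nat.land_assoc, Nat.and_self]
  · show (a.val &&& b.val) &&& b.val = a.val &&& b.val
    rw [Nat.land_assoc, Nat.and_self]
  · intro d hda hdb
    show d.val &&& (a.val &&& b.val) = d.val
    rw [← Nat.land_assoc]
    rw [le_def] at hda hdb
    rw [hda, hdb]

def botM : M := ⟨0, by decide⟩
def topM : M := ⟨1023, by decide⟩

lemma cbt : ∀ m : M, botM ≤ m ∧ m ≤ topM := by decide

lemma c3 : ∀ a b : M, (a < b ∧ ∀ c : M, a < c → ¬ c < b) → rkM b = rkM a + 1 := by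
  decide

lemma c4 : ∀ a b : M, a < b →
    (Finset.univ.filter (fun w : M => ((a ≤ w ∧ w ≤ b) ∧ Even (rkM w)))).card =
    (Finset.univ.filter (fun w : M => ((a ≤ w ∧ w ≤ b) ∧ Odd (rkM w)))).card := by
  decide

lemma c5 : (Finset.univ.filter (fun w : M => rkM w = 1)).card = 10 := by decide
lemma c6 : (Finset.univ.filter (fun w : M => rkM w = 2)).card = 33 := by decide
lemma c7 : (Finset.univ.filter (fun w : M => rkM w = 3)).card = 35 := by decide
lemma c8 : (Finset.univ.filter (fun w : M => rkM w = 4)).card = 12 := by decide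

lemma ncard_translate (Q : M → Prop) [DecidablePred Q] :
    {z : ↥(faceFamily facets) | Q (e.symm z)}.ncard = (Finset.univ.filter Q).card := by
  classical
  have himg : {z : ↥(faceFamily facets) | Q (e.symm z)} = ⇑e '' {w | Q w} := by
    ext z
    simp only [Set.mem_setOf_eq, Set.mem_image]
    constructor
    · intro h; exact ⟨e.symm z, h, by simp⟩
    · rintro ⟨w, hw, rfl⟩; simpa using hw
  rw [himg, Set.ncard_image_of_injective _ e.injective,
    Set.ncard_eq_toFinset_card']
  simp [Set.toFinset_setOf]

end Aux

open Aux in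
/-- The face family of `(10₍₃₃,₃₅₎)`, ordered by inclusion, is a lattice,
graded of length 5, Eulerian, and has 10, 33, 35, 12 elements of
rank 1, 2, 3, 4 respectively: `(10,33,35,12)` is the f-vector of an
Eulerian lattice of length 5. -/
theorem lattice_10_33_35_12 :
    (∀ a b : ↥(faceFamily facets), ∃ c : ↥(faceFamily facets), IsLUB {a, b} c) ∧
    (∀ a b : ↥(faceFamily facets), ∃ c : ↥(faceFamily facets), IsGLB {a, b} c) ∧
    ∃ rk : ↥(faceFamily facets) → ℕ,
      (∃ bot top : ↥(faceFamily facets),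
        (∀ z, bot ≤ z ∧ z ≤ top) ∧ rk bot = 0 ∧ rk top = 5) ∧
      (∀ x y : ↥(faceFamily facets), x ⋖ y → rk y = rk x + 1) ∧
      (∀ x y : ↥(faceFamily facets), x < y →
        {z ∈ Set.Icc x y | Even (rk z)}.ncard = {z ∈ Set.Icc x y | Odd (rk z)}.ncard) ∧
      {z | rk z = 1}.ncard = 10 ∧ {z | rk z = 2}.ncard = 33 ∧
      {z | rk z = 3}.ncard = 35 ∧ {z | rk z = 4}.ncard = 12 := by
  classical
  refine ⟨?_, ?_, fun z => rkM (e.symm z), ⟨e botM, e topM, ?_, ?_, ?_⟩, ?_, ?_, ?_, ?_, ?_, ?_⟩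
  · -- LUB
    intro a b
    obtain ⟨c, ⟨h1, h2⟩, h3⟩ := c1 (e.symm a) (e.symm b)
    refine ⟨e c, ?_, ?_⟩
    · intro z hz
      simp only [Set.mem_insert_iff, Set.mem_singleton_iff] at hz
      rcases hz with rfl | rfl
      · have := e.le_iff_le.2 h1; simpa using this
      · have := e.le_iff_le.2 h2; simpa using this
    · intro d hd
      have ha : a ≤ d := hd (Set.mem_insert _ _)
      have hb : b ≤ d := hd (by simp)
      have h3' := h3 (e.symm d) (e.symm.le_iff_le.2 ha) (e.symm.le_iff_le.2 hb)
      have := e.le_iff_le.2 h3'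
      simpa using this
  · -- GLB
    intro a b
    obtain ⟨c, ⟨h1, h2⟩, h3⟩ := c2 (e.symm a) (e.symm b)
    refine ⟨e c, ?_, ?_⟩
    · intro z hz
      simp only [Set.mem_insert_iff, Set.mem_singleton_iff] at hz
      rcases hz with rfl | rfl
      · have := e.le_iff_le.2 h1; simpa using this
      · have := e.le_iff_le.2 h2; simpa using this
    · intro d hd
      have ha : d ≤ a := hd (Set.mem_insert _ _)
      have hb : d ≤ b := hd (by simp)
      have h3' := h3 (e.symm d) (e.symm.le_iff_le.2 ha) (e.symm.le_iff_le.2 hb)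
      have := e.le_iff_le.2 h3'
      simpa using this
  · -- bounds
    intro z
    obtain ⟨h1, h2⟩ := cbt (e.symm z)
    constructor
    · have := e.le_iff_le.2 h1; simpa using this
    · have := e.le_iff_le.2 h2; simpa using this
  · -- rk bot
    simp only [OrderIso.symm_apply_apply]
    decide
  · -- rk top
    simp only [OrderIso.symm_apply_apply]
    decide
  · -- covers
    intro x y h
    have h' : e.symm x ⋖ e.symm y := (apply_covBy_apply_iff (e.symm : _ ≃o M)).2 h
    exact c3 _ _ ⟨h'.1, fun c hc => h'.2 hc⟩
  · -- Eulerian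
    intro x y hxy
    have hxy' : e.symm x < e.symm y := e.symm.lt_iff_lt.2 hxy
    have hs : ∀ (P : ℕ → Prop) [DecidablePred P],
        {z ∈ Set.Icc x y | P (rkM (e.symm z))} =
        {z : ↥(faceFamily facets) |
          ((e.symm x ≤ e.symm z ∧ e.symm z ≤ e.symm y) ∧ P (rkM (e.symm z)))} := by
      intro P _
      ext z
      simp only [Set.mem_setOf_eq, Set.mem_Icc, Set.sep_setOf]
      constructor
      · rintro ⟨⟨h1, h2⟩, h3⟩
        exact ⟨⟨e.symm.le_iff_le.2 h1, e.symm.le_iff_le.2 h2⟩, h3⟩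
      · rintro ⟨⟨h1, h2⟩, h3⟩
        exact ⟨⟨e.symm.le_iff_le.1 h1, e.symm.le_iff_le.1 h2⟩, h3⟩
    rw [hs Even, hs Odd,
      ncard_translate (fun w => (e.symm x ≤ w ∧ w ≤ e.symm y) ∧ Even (rkM w)),
      ncard_translate (fun w => (e.symm x ≤ w ∧ w ≤ e.symm y) ∧ Odd (rkM w))]
    exact c4 _ _ hxy'
  · exact (ncard_translate (fun w => rkM w = 1)).trans c5
  · exact (ncard_translate (fun w => rkM w = 2)).trans c6
  · exact (ncard_translate (fun w => rkM w = 3)).trans c7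
  · exact (ncard_translate (fun w => rkM w = 4)).trans c8
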